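/- arXiv:2403.02228 — 2 statements merged into one kernel-verified Lean document; each statement's English description precedes it below -/
import Mathlib

section
/- Let f : [a,b] → ℝ be continuous on [a,b] and differentiable on (a,b), with 0 < a < b, such that f(x) - x·f'(x) > 0 for all x in (a,b). If f(b) ≥ 0, then f(x) > 0 for all x in (a,b). -/
/-- If `f` is continuous on `[a,b]`, differentiable on `(a,b)`, `0 < a < b`,
satisfies `f x - x * f' x > 0` on `(a,b)`, and `f b ≥ 0`, then `f > 0` on `(a,b)`. -/
theorem stmt_0 (f : ℝ → ℝ) (a b : ℝ) (ha : 0 < a) (hab : a < b)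
    (hc : ContinuousOn f (Set.Icc a b))
    (hd : ∀ x ∈ Set.Ioo a b, DifferentiableAt ℝ f x)
    (hineq : ∀ x ∈ Set.Ioo a b, f x - x * deriv f x > 0)
    (hfb : f b ≥ 0) :
    ∀ x ∈ Set.Ioo a b, f x > 0 := by
  intro x hx
  obtain ⟨hax, hxb⟩ := hx
  set g : ℝ → ℝ := fun y => f y / y with hg
  have hx0 : 0 < x := ha.trans hax
  have hanti : StrictAntiOn g (Set.Icc x b) := by
    apply strictAntiOn_of_deriv_neg (convex_Icc x b)
    · apply ContinuousOn.div
      · exact hc.mono (Set.Icc_subset_Icc hax.le le_rfl)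
      · exact continuousOn_id
      · intro y hy
        exact (hx0.trans_le hy.1).ne'
    · intro y hy
      rw [interior_Icc] at hy
      have hy' : y ∈ Set.Ioo a b := ⟨hax.trans hy.1, hy.2⟩
      have hy0 : 0 < y := ha.trans hy'.1
      have hdy := hd y hy'
      have hder : HasDerivAt g ((deriv f y * y - f y * 1) / y ^ 2) y :=
        (hdy.hasDerivAt).div (hasDerivAt_id y) hy0.ne'
      rw [hder.deriv]
      have := hineq y hy'
      have hnum : deriv f y * y - f y * 1 < 0 := by nlinarith
      exact div_neg_of_neg_of_pos hnum (by positivity)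
  have h1 : g b < g x := by
    apply hanti (Set.left_mem_Icc.2 hxb.le) (Set.right_mem_Icc.2 hxb.le) hxb
  have h2 : 0 ≤ g b := div_nonneg hfb (ha.trans hab).le
  have h3 : 0 < g x := h2.trans_lt h1
  have := (div_pos_iff.1 h3)
  rcases this with ⟨h, _⟩ | ⟨_, h⟩
  · exact h
  · linarith
end

section
/- Let f : [a,b] → ℝ be continuous on [a,b] and differentiable on (a,b), with a < b < 0, such that f(x) - x·f'(x) > 0 for all x in (a,b). If f(a) ≥ 0, then f(x) > 0 for all x in (a,b). -/
/-- If `f` is continuous on `[a,b]`, differentiable on `(a,b)`, `a < b < 0`,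
satisfies `f x - x * f' x > 0` on `(a,b)`, and `f a ≥ 0`, then `f > 0` on `(a,b)`. -/
theorem stmt_1 (f : ℝ → ℝ) (a b : ℝ) (hab : a < b) (hb : b < 0)
    (hc : ContinuousOn f (Set.Icc a b))
    (hd : ∀ x ∈ Set.Ioo a b, DifferentiableAt ℝ f x)
    (hineq : ∀ x ∈ Set.Ioo a b, f x - x * deriv f x > 0)
    (hfa : f a ≥ 0) :
    ∀ x ∈ Set.Ioo a b, f x > 0 := by
  set g : ℝ → ℝ := fun x => f x / x with hg
  have hne : ∀ x ∈ Set.Icc a b, x ≠ 0 := fun x hx =>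
    ne_of_lt (lt_of_le_of_lt hx.2 hb)
  have hgc : ContinuousOn g (Set.Icc a b) :=
    hc.div continuousOn_id hne
  have hderiv : ∀ x ∈ Set.Ioo a b, HasDerivAt g ((deriv f x * x - f x * 1) / x ^ 2) x := by
    intro x hx
    exact ((hd x hx).hasDerivAt.div (hasDerivAt_id x)
      (hne x (Set.mem_Icc_of_Ioo hx)))
  have hanti : StrictAntiOn g (Set.Icc a b) := by
    apply StrictAntiOn.mono ?_ (le_refl _)
    apply strictAntiOn_of_deriv_neg (convex_Icc a b) hgc
    intro x hx
    rw [interior_Icc] at hx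
    rw [(hderiv x hx).deriv]
    apply div_neg_of_neg_of_pos
    · have := hineq x hx; nlinarith
    · have hx0 : x < 0 := hx.2.trans hb
      nlinarith
  intro x hx
  have hga : g a ≤ 0 := by
    have ha0 : a < 0 := hab.trans hb
    exact div_nonpos_of_nonneg_of_nonpos hfa ha0.le
  have hgx : g x < 0 :=
    lt_of_lt_of_le (hanti (Set.left_mem_Icc.2 hab.le) (Set.mem_Icc_of_Ioo hx) hx.1) hga
  have hx0 : x < 0 := hx.2.trans hb
  have : f x / x < 0 := hgx
  nlinarith [div_mul_cancel₀ (f x) (ne_of_lt hx0)]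
end
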